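/- Proposition (central moments): for every natural number r, the r-th central moment of the GRL distribution satisfies M_r = ∫_{0}^{∞} (t − μ)^r · f(t) dt = Σ_{i=0}^{r} C(r, i) · (−μ)^(r−i) · m_i, where μ = (λ^(1/α)/(α(λ−1))) · Γ(1/α) · (λ + 1/α − 1), m_0 = 1, and m_i = (i·λ^(i/α)/(α(λ−1))) · (λ + i/α − 1) · Γ(i/α) for i ≥ 1, with C(r, i) the binomial coefficient and Γ the Euler gamma function. -/

import Mathlib

open Real MeasureTheory Set

/-!
Expanding `(t - μ) ^ r` binomially reduces the claim to the raw moments `∫ t ^ s f(t) dt`.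
Splitting the factor `λ + t ^ α / λ - 2` writes `t ^ s f(t)` as a combination of the two
Gamma-type integrands `t ^ q exp (-t ^ α / λ)` with `q = s + α - 1` and `q = s + 2α - 1`, whence
`∫ t ^ s f = λ ^ (s/α) Γ(s/α + 1) (λ + s/α - 1) / (λ - 1)`; for `s = i ≥ 1` this is `m_i`
by `Γ(x + 1) = x Γ(x)`, and for `s = 0` it is `1`.
-/

noncomputable def grlDensity (lam α t : ℝ) : ℝ :=
  α / (lam * (lam - 1)) * t ^ (α - 1) * (lam + t ^ α / lam - 2) * exp (-(t ^ α / lam))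

section

variable {lam α : ℝ}

lemma rpow_mul_grlDensity (s : ℝ) {t : ℝ} (ht : 0 < t) :
    t ^ s * grlDensity lam α t =
      α / (lam * (lam - 1)) * (lam - 2) * (t ^ (s + α - 1) * exp (-lam⁻¹ * t ^ α)) +
        α / (lam * (lam - 1)) * lam⁻¹ * (t ^ (s + 2 * α - 1) * exp (-lam⁻¹ * t ^ α)) := by
  rw [show s + 2 * α - 1 = s + (α - 1) + α by ring, show s + α - 1 = s + (α - 1) by ring,
    rpow_add ht (s + (α - 1)), rpow_add ht s, grlDensity, neg_mul, inv_mul_eq_div]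
  ring

lemma integrableOn_rpow_mul_grlDensity (hlam : 0 < lam) (hα : 0 < α) {s : ℝ} (hs : -α < s) :
    IntegrableOn (fun t ↦ t ^ s * grlDensity lam α t) (Ioi 0) := by
  have hb : 0 < lam⁻¹ := inv_pos.mpr hlam
  refine IntegrableOn.congr_fun ?_ (fun t ht ↦ (rpow_mul_grlDensity s ht).symm)
    measurableSet_Ioi
  exact ((integrableOn_rpow_mul_exp_neg_mul_rpow (by linarith) hα hb).const_mul _).add
    ((integrableOn_rpow_mul_exp_neg_mul_rpow (by linarith) hα hb).const_mul _)

lemma integral_rpow_mul_grlDensity (hlam : 0 < lam) (hlam1 : lam ≠ 1) (hα : 0 < α) {s : ℝ}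
    (hs : -α < s) :
    ∫ t in Ioi 0, t ^ s * grlDensity lam α t =
      lam ^ (s / α) * Gamma (s / α + 1) * (lam + s / α - 1) / (lam - 1) := by
  have hb : 0 < lam⁻¹ := inv_pos.mpr hlam
  have hs₁ : -1 < s + α - 1 := by linarith
  have hs₂ : -1 < s + 2 * α - 1 := by linarith
  have hx : -1 < s / α := by rwa [lt_div_iff₀ hα, neg_one_mul]
  have hinv : ∀ y : ℝ, lam⁻¹ ^ (-y) = lam ^ y := fun y ↦ by
    rw [inv_rpow hlam.le, rpow_neg hlam.le, inv_inv]
  have e₁ : -(s + α - 1 + 1) / α = -(s / α + 1) := by field_simp; ring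
  have e₂ : -(s + 2 * α - 1 + 1) / α = -(s / α + 1 + 1) := by field_simp; ring
  have e₃ : (s + α - 1 + 1) / α = s / α + 1 := by field_simp; ring
  have e₄ : (s + 2 * α - 1 + 1) / α = s / α + 1 + 1 := by field_simp; ring
  have hΓ : Gamma (s / α + 1 + 1) = (s / α + 1) * Gamma (s / α + 1) :=
    Gamma_add_one (by linarith)
  rw [setIntegral_congr_fun measurableSet_Ioi fun t ht ↦ rpow_mul_grlDensity s ht,
    integral_add ((integrableOn_rpow_mul_exp_neg_mul_rpow hs₁ hα hb).const_mul _)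
      ((integrableOn_rpow_mul_exp_neg_mul_rpow hs₂ hα hb).const_mul _),
    integral_const_mul, integral_const_mul, integral_rpow_mul_exp_neg_mul_rpow hα hs₁ hb,
    integral_rpow_mul_exp_neg_mul_rpow hα hs₂ hb, e₁, e₂, e₃, e₄, hinv, hinv, hΓ,
    rpow_add hlam (s / α + 1), rpow_add hlam (s / α), rpow_one]
  have : lam - 1 ≠ 0 := sub_ne_zero.mpr hlam1
  field_simp
  ring

lemma integrableOn_pow_mul_grlDensity (hlam : 0 < lam) (hα : 0 < α) (i : ℕ) :
    IntegrableOn (fun t ↦ t ^ i * grlDensity lam α t) (Ioi 0) := by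
  have hi : -α < i := (neg_lt_zero.mpr hα).trans_le i.cast_nonneg
  simpa using integrableOn_rpow_mul_grlDensity hlam hα hi

lemma integral_pow_mul_grlDensity (hlam : 0 < lam) (hlam1 : lam ≠ 1) (hα : 0 < α) (i : ℕ) :
    ∫ t in Ioi 0, t ^ i * grlDensity lam α t =
      if i = 0 then 1 else
        (i * lam ^ ((i : ℝ) / α) / (α * (lam - 1))) * (lam + i / α - 1) * Gamma (i / α) := by
  have hi : -α < i := (neg_lt_zero.mpr hα).trans_le i.cast_nonneg
  have hmoment := integral_rpow_mul_grlDensity hlam hlam1 hα hi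
  simp only [rpow_natCast] at hmoment
  rw [hmoment]
  have : lam - 1 ≠ 0 := sub_ne_zero.mpr hlam1
  split_ifs with hi₀
  · simp [hi₀, this]
  · rw [Gamma_add_one (by positivity)]
    field_simp

end

theorem grl_central_moment_general (lam α : ℝ) (hlam : 2 ≤ lam) (hα : 0 < α) (r : ℕ) (μ : ℝ) :
    ∫ t in Set.Ioi (0 : ℝ),
      (t - μ) ^ r * ((α / (lam * (lam - 1))) * t ^ (α - 1) * (lam + t ^ α / lam - 2) *
        Real.exp (-(t ^ α / lam)))
      = ∑ i ∈ Finset.range (r + 1),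
          (r.choose i : ℝ) * (-μ) ^ (r - i) *
            (if i = 0 then 1 else
              ((i : ℝ) * lam ^ ((i : ℝ) / α) / (α * (lam - 1))) * (lam + (i : ℝ) / α - 1) *
                Real.Gamma ((i : ℝ) / α)) := by
  have hlam₀ : 0 < lam := by linarith
  have hlam₁ : lam ≠ 1 := by linarith
  have hexpand : ∀ t, (t - μ) ^ r * grlDensity lam α t =
      ∑ i ∈ Finset.range (r + 1),
        r.choose i * (-μ) ^ (r - i) * (t ^ i * grlDensity lam α t) := by
    intro t
    rw [sub_eq_add_neg, add_pow, Finset.sum_mul]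
    exact Finset.sum_congr rfl fun i _ ↦ by ring
  change ∫ t in Ioi 0, (t - μ) ^ r * grlDensity lam α t = _
  simp_rw [hexpand]
  rw [integral_finsetSum _ fun i _ ↦ (integrableOn_pow_mul_grlDensity hlam₀ hα i).const_mul _]
  refine Finset.sum_congr rfl fun i _ ↦ ?_
  rw [integral_const_mul, integral_pow_mul_grlDensity hlam₀ hlam₁ hα]

/-- The r-th central moment of the GRL distribution:
M_r = Σ_{i=0}^{r} C(r,i) (-μ)^(r-i) m_i, where μ is the mean, m_0 = 1 and
m_i = (i λ^(i/α)/(α(λ-1))) (λ + i/α - 1) Γ(i/α) for i ≥ 1. -/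
theorem grl_central_moment (lam α : ℝ) (hlam : 2 ≤ lam) (hα : 0 < α) (r : ℕ) (μ : ℝ)
    (hμ : μ = (lam ^ ((1 : ℝ) / α) / (α * (lam - 1))) * Real.Gamma (1 / α) *
      (lam + 1 / α - 1)) :
    ∫ t in Set.Ioi (0 : ℝ),
      (t - μ) ^ r * ((α / (lam * (lam - 1))) * t ^ (α - 1) * (lam + t ^ α / lam - 2) *
        Real.exp (-(t ^ α / lam)))
      = ∑ i ∈ Finset.range (r + 1),
          (r.choose i : ℝ) * (-μ) ^ (r - i) *
            (if i = 0 then 1 else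
              ((i : ℝ) * lam ^ ((i : ℝ) / α) / (α * (lam - 1))) * (lam + (i : ℝ) / α - 1) *
                Real.Gamma ((i : ℝ) / α)) :=
  grl_central_moment_general lam α hlam hα r μ
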